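/- For every k ≥ 2 and every unitary U ∈ U(d^n), the quantity ‖U‖_{P^k}^{2^k} := E_{h₁,…,h_k ∈ F_d^{2n}} d^{−n} tr(∂_{h_k}⋯∂_{h₁} U) is a nonnegative real number, and F_{C^{(k−1)}}(U)^{2^k} ≤ ‖U‖_{P^k}^{2^k}; equivalently, F_{C^{(k−1)}}(U) ≤ ‖U‖_{P^k}. -/

import Mathlib

/-!
The twirl `∑_h W_h A W_h* = d^n tr(A) · 1` turns the average over `h` of
`⟨∂_h V, ∂_h U⟩` into `|⟨V, U⟩|²`. Since `∂_h` maps `C^{(m+1)}` into `C^{(m)}` and `C^{(0)}`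
consists of scalar phases, induction on `m` with Jensen's inequality for `t ↦ t^{2^m}` gives
`|⟨V, U⟩|^{2^{m+1}} ≤ ‖U‖_{P^{m+1}}^{2^{m+1}}` for `V ∈ C^{(m)}`, and the same recursion shows
that `‖U‖_{P^k}^{2^k}` is a nonnegative real. The bound of the theorem then follows from
`|⟨V, U⟩| ≤ 1` for unitaries.
-/

open Matrix Complex

namespace CH

variable (d n : ℕ) [NeZero d]

/-- Phase space `F_d^{2n}`, written as pairs `(u, v)` with `u, v ∈ F_d^n`. -/
abbrev PSpace := (Fin n → ZMod d) × (Fin n → ZMod d)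

/-- Linear maps on `ℂ^{F_d^n}`, as matrices. -/
abbrev Mat := Matrix (Fin n → ZMod d) (Fin n → ZMod d) ℂ

/-- `ω = e^{2πi/d}`. -/
noncomputable def omg : ℂ := Complex.exp (2 * Real.pi * Complex.I / d)

/-- `τ = (-1)^d e^{iπ/d}`. -/
noncomputable def tau : ℂ := (-1 : ℂ) ^ d * Complex.exp (Real.pi * Complex.I / d)

/-- `D = 2d` if `d = 2`, else `D = d`. -/
def Dd : ℕ := if d = 2 then 4 else d

/-- The translation operator `X^v`, with `X^v |u⟩ = |u + v⟩`. -/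
noncomputable def Xop (v : Fin n → ZMod d) : Mat d n :=
  Matrix.of fun u u' => if u = u' + v then 1 else 0

/-- The phase operator `Z^v`, with `Z^v |u⟩ = ω^{u·v} |u⟩`. -/
noncomputable def Zop (v : Fin n → ZMod d) : Mat d n :=
  Matrix.diagonal fun u => omg d ^ (∑ i, u i * v i : ZMod d).val

/-- The Weyl operator `W_{(u,v)} = τ^{-(|u₁v₁| + ⋯ + |uₙvₙ|)} Z^u X^v`. -/
noncomputable def Weyl (a : PSpace d n) : Mat d n :=
  tau d ^ (-(∑ i, ((a.1 i * a.2 i).val : ℤ))) • (Zop d n a.1 * Xop d n a.2)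

/-- Normalized trace inner product `⟨A,B⟩ = d^{-n} tr(A* B)`. -/
noncomputable def trInner (A B : Mat d n) : ℂ := ((d : ℂ) ^ n)⁻¹ * (Aᴴ * B).trace

/-- Normalized Frobenius norm `‖A‖₂ = ⟨A,A⟩^{1/2}`. -/
noncomputable def hsNorm (A : Mat d n) : ℝ := Real.sqrt (trInner d n A A).re

/-- Pauli derivative `∂_h U = W_h U W_h* U*`. -/
noncomputable def pderiv (h : PSpace d n) (U : Mat d n) : Mat d n :=
  Weyl d n h * U * (Weyl d n h)ᴴ * Uᴴ

/-- The quantity `‖U‖_{P^k}^{2^k} = E_{h₁,…,h_k} d^{-n} tr(∂_{h_k} ⋯ ∂_{h₁} U)`. -/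
noncomputable def pq : ℕ → Mat d n → ℂ
  | 0, U => ((d : ℂ) ^ n)⁻¹ * U.trace
  | (k+1), U => ((d : ℂ) ^ (2*n))⁻¹ * ∑ h : PSpace d n, pq k (pderiv d n h U)

/-- The `k`-th Pauli uniformity norm `‖U‖_{P^k}`, the `2^k`-th root of `pq k U`. -/
noncomputable def pnorm (k : ℕ) (U : Mat d n) : ℝ := (pq d n k U).re ^ (((2:ℝ) ^ k)⁻¹)

/-- The Pauli group `C^{(1)} = {τ^p W_h : p ∈ Z_D, h ∈ F_d^{2n}}`. -/
def pauliGroup : Set (Mat d n) :=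
  {U | ∃ (p : ℕ) (h : PSpace d n), U = tau d ^ p • Weyl d n h}

/-- The Clifford hierarchy. -/
def cliff : ℕ → Set (Mat d n)
  | 0 => {U | ∃ θ : ℝ, U = Complex.exp (θ * Complex.I) • (1 : Mat d n)}
  | 1 => pauliGroup d n
  | (k+2) => {U | U ∈ unitary (Mat d n) ∧
      ∀ P ∈ pauliGroup d n, U * P * Uᴴ ∈ cliff (k+1)}

/-- Pauli polynomials of degree at most `k`. -/
def ppoly : ℕ → Set (Mat d n)
  | 0 => {U | ∃ θ : ℝ, U = Complex.exp (θ * Complex.I) • (1 : Mat d n)}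
  | (k+1) => {U | U ∈ unitary (Mat d n) ∧ ∀ h : PSpace d n, pderiv d n h U ∈ ppoly k}

/-- Symplectic form `[(u,v),(u',v')] = u·v' - u'·v` on `F_d^{2n}`. -/
def symp (a b : PSpace d n) : ZMod d :=
  (∑ i, a.1 i * b.2 i) - (∑ i, b.1 i * a.2 i)

/-- Multiplication of the Heisenberg group. -/
def heisMul (β : PSpace d n → PSpace d n → ZMod (Dd d))
    (x y : ZMod (Dd d) × PSpace d n) : ZMod (Dd d) × PSpace d n :=
  (x.1 + y.1 + β x.2 y.2, x.2 + y.2)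

end CH

namespace CH

open ZMod (stdAddChar stdAddChar_apply)

section General

lemma pow_mean_le_mean_pow {ι : Type*} [Fintype ι] [Nonempty ι] (f : ι → ℝ)
    (hf : ∀ i, 0 ≤ f i) (m : ℕ) :
    ((Fintype.card ι : ℝ)⁻¹ * ∑ i, f i) ^ m ≤ (Fintype.card ι : ℝ)⁻¹ * ∑ i, f i ^ m := by
  simp only [Finset.mul_sum]
  refine Real.pow_arith_mean_le_arith_mean_pow _ _ _ (fun _ _ => by positivity) ?_
    (fun i _ => hf i) m
  rw [Finset.sum_const, Finset.card_univ, nsmul_eq_mul, mul_inv_cancel₀]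
  exact Nat.cast_ne_zero.2 Fintype.card_ne_zero

lemma norm_trace_le_card_of_mem_unitary {ι 𝕜 : Type*} [Fintype ι] [DecidableEq ι] [RCLike 𝕜]
    {W : Matrix ι ι 𝕜} (hW : W ∈ unitary (Matrix ι ι 𝕜)) : ‖W.trace‖ ≤ Fintype.card ι :=
  calc ‖W.trace‖ ≤ ∑ i, ‖W i i‖ := norm_sum_le _ _
    _ ≤ ∑ _i : ι, (1 : ℝ) := Finset.sum_le_sum fun i _ => entry_norm_bound_of_unitary hW i i
    _ = Fintype.card ι := by simp

lemma mem_unitary_of_norm_eq_one {c : ℂ} (hc : ‖c‖ = 1) : c ∈ unitary ℂ :=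
  Unitary.mem_iff_star_mul_self.2 <| by rw [Complex.star_def, Complex.conj_mul', hc]; norm_num

end General

section Scalars

variable {d : ℕ}

lemma omg_pow_val [NeZero d] (c : ZMod d) : omg d ^ c.val = stdAddChar c := by
  rw [stdAddChar_apply, ZMod.toCircle_apply, omg, ← Complex.exp_nat_mul]
  ring_nf

lemma norm_tau : ‖tau d‖ = 1 := by
  rw [tau, norm_mul, norm_pow, norm_neg, norm_one, one_pow, one_mul,
    show (Real.pi : ℂ) * Complex.I / d = ((Real.pi / d : ℝ) : ℂ) * Complex.I by push_cast; ring,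
    Complex.norm_exp_ofReal_mul_I]

lemma tau_ne_zero : tau d ≠ 0 := norm_ne_zero_iff.1 (by rw [norm_tau]; exact one_ne_zero)

lemma tau_sq : tau d ^ 2 = omg d := by
  rw [tau, mul_pow, ← pow_mul, mul_comm d, pow_mul, neg_one_sq, one_pow, one_mul,
    ← Complex.exp_nat_mul, omg]
  ring_nf

lemma norm_tau_zpow (z : ℤ) : ‖tau d ^ z‖ = 1 := by
  rw [norm_zpow, norm_tau, _root_.one_zpow]

lemma star_tau_zpow (z : ℤ) : star (tau d ^ z) = tau d ^ (-z) := by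
  rw [_root_.zpow_neg]
  exact (Complex.inv_eq_conj (norm_tau_zpow z)).symm

lemma tau_zpow_mem_unitary (z : ℤ) : tau d ^ z ∈ unitary ℂ :=
  mem_unitary_of_norm_eq_one (norm_tau_zpow z)

lemma exists_exp_eq_tau_zpow (z : ℤ) : ∃ θ : ℝ, Complex.exp (θ * Complex.I) = tau d ^ z :=
  (Complex.norm_eq_one_iff _).1 (norm_tau_zpow z)

variable [NeZero d]

lemma tau_pow_two_mul : tau d ^ (2 * d) = 1 := by
  rw [pow_mul, tau_sq]
  exact (Complex.isPrimitiveRoot_exp d (NeZero.ne d)).pow_eq_one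

lemma stdAddChar_eq_tau_pow (c : ZMod d) : (stdAddChar c : ℂ) = tau d ^ (2 * c.val : ℤ) := by
  rw [← omg_pow_val, ← tau_sq, ← pow_mul]
  norm_cast

lemma exists_pow_eq_tau_zpow (z : ℤ) : ∃ p : ℕ, tau d ^ z = tau d ^ p := by
  have hfin : IsOfFinOrder (Units.mk0 (tau d) tau_ne_zero) := by
    refine isOfFinOrder_iff_pow_eq_one.2 ⟨2 * d, by have := NeZero.pos d; omega, ?_⟩
    ext; simpa using tau_pow_two_mul
  obtain ⟨p, hp⟩ := hfin.mem_powers_iff_mem_zpowers.2 ⟨z, rfl⟩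
  exact ⟨p, by simpa using congrArg Units.val hp.symm⟩

end Scalars

section Operators

variable {d n : ℕ}

lemma Xop_apply (v a b : Fin n → ZMod d) : Xop d n v a b = if a = b + v then 1 else 0 := rfl

lemma Xop_zero : Xop d n 0 = 1 := by
  ext a b
  simp [Xop_apply, Matrix.one_apply]

lemma Xop_conjTranspose (v : Fin n → ZMod d) : (Xop d n v)ᴴ = Xop d n (-v) := by
  ext a b
  simp only [conjTranspose_apply, Xop_apply, apply_ite star, star_one, star_zero,
    ← sub_eq_add_neg, eq_sub_iff_add_eq, eq_comm (a := b)]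

variable [NeZero d]

lemma star_stdAddChar (c : ZMod d) : star (stdAddChar c) = stdAddChar (-c) := by
  rw [stdAddChar_apply, stdAddChar_apply, AddChar.map_neg_eq_inv, Circle.coe_inv_eq_conj]
  rfl

lemma Zop_eq_diagonal (v : Fin n → ZMod d) :
    Zop d n v = diagonal fun u => stdAddChar (u ⬝ᵥ v) := by
  simp only [Zop, omg_pow_val]
  rfl

lemma Xop_mul_apply (v : Fin n → ZMod d) (B : Mat d n) (a b : Fin n → ZMod d) :
    (Xop d n v * B) a b = B (a - v) b := by
  simp [Matrix.mul_apply, Xop_apply, ← eq_sub_iff_add_eq, eq_comm (a := a)]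

lemma mul_Xop_apply (v : Fin n → ZMod d) (B : Mat d n) (a b : Fin n → ZMod d) :
    (B * Xop d n v) a b = B a (b + v) := by
  simp [Matrix.mul_apply, Xop_apply]

lemma Zop_mul_apply (v : Fin n → ZMod d) (B : Mat d n) (a b : Fin n → ZMod d) :
    (Zop d n v * B) a b = stdAddChar (a ⬝ᵥ v) * B a b := by
  rw [Zop_eq_diagonal, diagonal_mul]

lemma mul_Zop_apply (v : Fin n → ZMod d) (B : Mat d n) (a b : Fin n → ZMod d) :
    (B * Zop d n v) a b = B a b * stdAddChar (b ⬝ᵥ v) := by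
  rw [Zop_eq_diagonal, mul_diagonal]

lemma Xop_mul_Xop (v w : Fin n → ZMod d) : Xop d n v * Xop d n w = Xop d n (v + w) := by
  ext a b
  simp only [Xop_mul_apply, Xop_apply, sub_eq_iff_eq_add, add_assoc, add_comm w]

lemma Zop_mul_Zop (v w : Fin n → ZMod d) : Zop d n v * Zop d n w = Zop d n (v + w) := by
  simp only [Zop_eq_diagonal, diagonal_mul_diagonal, dotProduct_add, AddChar.map_add_eq_mul]

lemma Zop_zero : Zop d n 0 = 1 := by
  simp [Zop_eq_diagonal]

lemma Zop_conjTranspose (v : Fin n → ZMod d) : (Zop d n v)ᴴ = Zop d n (-v) := by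
  simp only [Zop_eq_diagonal, diagonal_conjTranspose, Pi.star_def, star_stdAddChar,
    dotProduct_neg]

lemma Xop_mul_Zop (v w : Fin n → ZMod d) :
    Xop d n v * Zop d n w = stdAddChar (-(v ⬝ᵥ w)) • (Zop d n w * Xop d n v) := by
  ext a b
  rw [mul_Zop_apply, Matrix.smul_apply, Zop_mul_apply, smul_eq_mul, Xop_apply]
  split_ifs with hab
  · rw [hab, add_dotProduct, ← mul_assoc, ← AddChar.map_add_eq_mul, neg_add_cancel_comm_assoc]
    ring
  · ring

lemma Xop_mem_unitary (v : Fin n → ZMod d) : Xop d n v ∈ unitary (Mat d n) :=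
  Matrix.mem_unitaryGroup_iff.2 <| by
    rw [star_eq_conjTranspose, Xop_conjTranspose, Xop_mul_Xop, add_neg_cancel, Xop_zero]

lemma Zop_mem_unitary (v : Fin n → ZMod d) : Zop d n v ∈ unitary (Mat d n) :=
  Matrix.mem_unitaryGroup_iff.2 <| by
    rw [star_eq_conjTranspose, Zop_conjTranspose, Zop_mul_Zop, add_neg_cancel, Zop_zero]

end Operators

section Weyl

variable {d n : ℕ} [NeZero d]

/-- Integer powers of `τ` make these sets closed under adjoints; since `τ` has finite order, their
union is still `pauliGroup d n` (`mem_pauliGroup_iff`). -/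
def pauliFiber (a : PSpace d n) : Set (Mat d n) := {P | ∃ z : ℤ, P = tau d ^ z • Weyl d n a}

lemma Weyl_mem_pauliFiber (a : PSpace d n) : Weyl d n a ∈ pauliFiber a :=
  ⟨0, by rw [zpow_zero, one_smul]⟩

lemma tau_zpow_smul_mem_pauliFiber {a : PSpace d n} {P : Mat d n} (hP : P ∈ pauliFiber a)
    (z : ℤ) : tau d ^ z • P ∈ pauliFiber a := by
  obtain ⟨w, rfl⟩ := hP
  exact ⟨z + w, by rw [smul_smul, zpow_add₀ tau_ne_zero]⟩

lemma stdAddChar_smul_mem_pauliFiber {a : PSpace d n} {P : Mat d n} (hP : P ∈ pauliFiber a)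
    (c : ZMod d) : (stdAddChar c : ℂ) • P ∈ pauliFiber a := by
  rw [stdAddChar_eq_tau_pow]
  exact tau_zpow_smul_mem_pauliFiber hP _

lemma Zop_mul_Xop_mem_pauliFiber (a : PSpace d n) : Zop d n a.1 * Xop d n a.2 ∈ pauliFiber a := by
  refine ⟨∑ i, ((a.1 i * a.2 i).val : ℤ), ?_⟩
  rw [Weyl, smul_smul, ← zpow_add₀ tau_ne_zero, add_neg_cancel, zpow_zero, one_smul]

lemma Weyl_mul_Weyl_mem_pauliFiber (a b : PSpace d n) :
    Weyl d n a * Weyl d n b ∈ pauliFiber (a + b) := by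
  have hZX : Zop d n a.1 * Xop d n a.2 * (Zop d n b.1 * Xop d n b.2)
      = stdAddChar (-(a.2 ⬝ᵥ b.1)) • (Zop d n (a + b).1 * Xop d n (a + b).2) := by
    rw [Matrix.mul_assoc, ← Matrix.mul_assoc (Xop d n a.2), Xop_mul_Zop, Matrix.smul_mul,
      Matrix.mul_smul, Matrix.mul_assoc, ← Matrix.mul_assoc, ← Matrix.mul_assoc, Zop_mul_Zop,
      Matrix.mul_assoc, Xop_mul_Xop]
    rfl
  rw [Weyl, Weyl, Matrix.smul_mul, Matrix.mul_smul, hZX]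
  exact tau_zpow_smul_mem_pauliFiber (tau_zpow_smul_mem_pauliFiber
    (stdAddChar_smul_mem_pauliFiber (Zop_mul_Xop_mem_pauliFiber _) _) _) _

lemma mul_mem_pauliFiber {a b : PSpace d n} {P Q : Mat d n} (hP : P ∈ pauliFiber a)
    (hQ : Q ∈ pauliFiber b) : P * Q ∈ pauliFiber (a + b) := by
  obtain ⟨z, rfl⟩ := hP
  obtain ⟨w, rfl⟩ := hQ
  rw [Matrix.smul_mul, Matrix.mul_smul]
  exact tau_zpow_smul_mem_pauliFiber
    (tau_zpow_smul_mem_pauliFiber (Weyl_mul_Weyl_mem_pauliFiber a b) _) _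

lemma Weyl_conjTranspose_mem_pauliFiber (a : PSpace d n) : (Weyl d n a)ᴴ ∈ pauliFiber (-a) := by
  rw [Weyl, conjTranspose_smul, star_tau_zpow, conjTranspose_mul, Xop_conjTranspose,
    Zop_conjTranspose, Xop_mul_Zop]
  exact tau_zpow_smul_mem_pauliFiber
    (stdAddChar_smul_mem_pauliFiber (Zop_mul_Xop_mem_pauliFiber (-a)) _) _

lemma conjTranspose_mem_pauliFiber {a : PSpace d n} {P : Mat d n} (hP : P ∈ pauliFiber a) :
    Pᴴ ∈ pauliFiber (-a) := by
  obtain ⟨z, rfl⟩ := hP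
  rw [conjTranspose_smul, star_tau_zpow]
  exact tau_zpow_smul_mem_pauliFiber (Weyl_conjTranspose_mem_pauliFiber a) _

lemma Weyl_zero : Weyl d n 0 = 1 := by
  simp [Weyl, Zop_zero, Xop_zero]

lemma Weyl_mem_unitary (a : PSpace d n) : Weyl d n a ∈ unitary (Mat d n) :=
  Unitary.smul_mem_of_mem (tau_zpow_mem_unitary _)
    (mul_mem (Zop_mem_unitary a.1) (Xop_mem_unitary a.2))

lemma pauliFiber_subset_unitary (a : PSpace d n) : pauliFiber a ⊆ unitary (Mat d n) := by
  rintro _ ⟨z, rfl⟩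
  exact Unitary.smul_mem_of_mem (tau_zpow_mem_unitary z) (Weyl_mem_unitary a)

lemma mem_pauliGroup_iff {P : Mat d n} : P ∈ pauliGroup d n ↔ ∃ a, P ∈ pauliFiber a := by
  constructor
  · rintro ⟨p, a, rfl⟩
    exact ⟨a, p, by rw [zpow_natCast]⟩
  · rintro ⟨a, z, rfl⟩
    obtain ⟨p, hp⟩ := exists_pow_eq_tau_zpow (d := d) z
    exact ⟨p, a, by rw [hp]⟩

end Weyl

section Hierarchy

variable {d n : ℕ} [NeZero d]

lemma Weyl_mem_pauliGroup (a : PSpace d n) : Weyl d n a ∈ pauliGroup d n :=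
  mem_pauliGroup_iff.2 ⟨a, Weyl_mem_pauliFiber a⟩

lemma pauliGroup_subset_unitary : pauliGroup d n ⊆ unitary (Mat d n) := fun _ hP => by
  obtain ⟨a, ha⟩ := mem_pauliGroup_iff.1 hP
  exact pauliFiber_subset_unitary a ha

lemma mul_mem_pauliGroup {P Q : Mat d n} (hP : P ∈ pauliGroup d n) (hQ : Q ∈ pauliGroup d n) :
    P * Q ∈ pauliGroup d n := by
  obtain ⟨a, ha⟩ := mem_pauliGroup_iff.1 hP
  obtain ⟨b, hb⟩ := mem_pauliGroup_iff.1 hQ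
  exact mem_pauliGroup_iff.2 ⟨a + b, mul_mem_pauliFiber ha hb⟩

lemma conjTranspose_mem_pauliGroup {P : Mat d n} (hP : P ∈ pauliGroup d n) :
    Pᴴ ∈ pauliGroup d n := by
  obtain ⟨a, ha⟩ := mem_pauliGroup_iff.1 hP
  exact mem_pauliGroup_iff.2 ⟨-a, conjTranspose_mem_pauliFiber ha⟩

lemma pauliFiber_zero_subset_cliff_zero : pauliFiber (0 : PSpace d n) ⊆ cliff d n 0 := by
  rintro _ ⟨z, rfl⟩
  obtain ⟨θ, hθ⟩ := exists_exp_eq_tau_zpow (d := d) z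
  exact ⟨θ, by rw [hθ, Weyl_zero]⟩

lemma cliff_subset_unitary : ∀ m, cliff d n m ⊆ unitary (Mat d n)
  | 0, _, ⟨θ, hU⟩ => hU ▸ Unitary.smul_mem_of_mem
      (mem_unitary_of_norm_eq_one (Complex.norm_exp_ofReal_mul_I θ)) (one_mem _)
  | 1, _, hU => pauliGroup_subset_unitary hU
  | _ + 2, _, hU => hU.1

lemma conj_mem_cliff {P : Mat d n} (hP : P ∈ pauliGroup d n) :
    ∀ m, ∀ V ∈ cliff d n m, P * V * Pᴴ ∈ cliff d n m
  | 0, _, ⟨θ, hV⟩ => ⟨θ, by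
      rw [hV, Matrix.mul_smul, Matrix.mul_one, Matrix.smul_mul,
        ← star_eq_conjTranspose, Unitary.mul_star_self_of_mem (pauliGroup_subset_unitary hP)]⟩
  | 1, _, hV => mul_mem_pauliGroup (mul_mem_pauliGroup hP hV) (conjTranspose_mem_pauliGroup hP)
  | m + 2, V, hV => by
    refine ⟨mul_mem (mul_mem (pauliGroup_subset_unitary hP) hV.1)
      (Unitary.star_mem (pauliGroup_subset_unitary hP)), fun Q hQ => ?_⟩
    have hPQP : Pᴴ * Q * P ∈ pauliGroup d n :=
      mul_mem_pauliGroup (mul_mem_pauliGroup (conjTranspose_mem_pauliGroup hP) hQ) hP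
    convert conj_mem_cliff hP (m + 1) _ (hV.2 _ hPQP) using 1
    simp only [conjTranspose_mul, conjTranspose_conjTranspose, Matrix.mul_assoc]

lemma pauli_mul_mem_cliff {P : Mat d n} (hP : P ∈ pauliGroup d n) :
    ∀ m, ∀ V ∈ cliff d n (m + 1), P * V ∈ cliff d n (m + 1)
  | 0, _, hV => mul_mem_pauliGroup hP hV
  | m + 1, V, hV => by
    refine ⟨mul_mem (pauliGroup_subset_unitary hP) hV.1, fun Q hQ => ?_⟩
    convert conj_mem_cliff hP (m + 1) _ (hV.2 _ hQ) using 1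
    simp only [conjTranspose_mul, Matrix.mul_assoc]

lemma pderiv_mem_cliff (h : PSpace d n) :
    ∀ m, ∀ V ∈ cliff d n (m + 1), pderiv d n h V ∈ cliff d n m
  | 0, V, hV => by
    obtain ⟨a, ha⟩ := mem_pauliGroup_iff.1 hV
    have := mul_mem_pauliFiber (mul_mem_pauliFiber (mul_mem_pauliFiber (Weyl_mem_pauliFiber h) ha)
      (Weyl_conjTranspose_mem_pauliFiber h)) (conjTranspose_mem_pauliFiber ha)
    rw [add_neg_cancel_comm, add_neg_cancel] at this
    exact pauliFiber_zero_subset_cliff_zero this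
  | m + 1, V, hV => by
    rw [pderiv, Matrix.mul_assoc, Matrix.mul_assoc, ← Matrix.mul_assoc V]
    exact pauli_mul_mem_cliff (Weyl_mem_pauliGroup h) m _
      (hV.2 _ (conjTranspose_mem_pauliGroup (Weyl_mem_pauliGroup h)))

end Hierarchy

section Twirl

variable {d n : ℕ} [NeZero d]

lemma sum_stdAddChar_dotProduct (c : Fin n → ZMod d) :
    ∑ u, stdAddChar (c ⬝ᵥ u) = if c = 0 then (d : ℂ) ^ n else 0 := by
  split_ifs with hc
  · simp [hc, ZMod.card]
  obtain ⟨i, hi⟩ := Function.ne_iff.1 hc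
  let φ : AddChar (Fin n → ZMod d) ℂ :=
    stdAddChar.compAddMonoidHom (AddMonoidHom.mk' (c ⬝ᵥ ·) (dotProduct_add c))
  refine (AddChar.sum_eq_zero_iff_ne_zero (ψ := φ)).2 (AddChar.ne_zero_iff.2 ⟨Pi.single i 1, ?_⟩)
  rw [← AddChar.map_zero_eq_one (stdAddChar (N := d))]
  change stdAddChar (c ⬝ᵥ Pi.single i 1) ≠ _
  rw [dotProduct_single, mul_one]
  exact ZMod.injective_stdAddChar.ne hi

lemma conj_Weyl_apply (h : PSpace d n) (A : Mat d n) (x y : Fin n → ZMod d) :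
    (Weyl d n h * A * (Weyl d n h)ᴴ) x y = stdAddChar ((x - y) ⬝ᵥ h.1) * A (x - h.2) (y - h.2) := by
  have hphase : Weyl d n h * A * (Weyl d n h)ᴴ
      = Zop d n h.1 * (Xop d n h.2 * A * Xop d n (-h.2)) * Zop d n (-h.1) := by
    rw [Weyl, conjTranspose_smul, star_tau_zpow, Matrix.smul_mul, Matrix.smul_mul,
      Matrix.mul_smul, smul_smul, ← zpow_add₀ tau_ne_zero, neg_neg, neg_add_cancel, zpow_zero,
      one_smul, conjTranspose_mul, Xop_conjTranspose, Zop_conjTranspose]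
    simp only [Matrix.mul_assoc]
  rw [hphase, mul_Zop_apply, Zop_mul_apply, mul_Xop_apply, Xop_mul_apply, sub_dotProduct,
    AddChar.map_sub_eq_div, dotProduct_neg, AddChar.map_neg_eq_inv, ← sub_eq_add_neg]
  ring

lemma sum_Weyl_conj (A : Mat d n) :
    ∑ h : PSpace d n, Weyl d n h * A * (Weyl d n h)ᴴ = ((d : ℂ) ^ n * A.trace) • 1 := by
  ext x y
  simp only [Matrix.sum_apply, conj_Weyl_apply, Fintype.sum_prod_type, ← Finset.sum_mul,
    ← Finset.mul_sum]
  rw [sum_stdAddChar_dotProduct, Matrix.smul_apply, Matrix.one_apply]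
  simp_rw [sub_eq_zero]
  split_ifs with hxy
  · rw [hxy, smul_eq_mul, mul_one, trace]
    exact congrArg _ (Equiv.sum_comp (Equiv.subLeft y) fun j => A j j)
  · rw [zero_mul, smul_zero]

lemma pderiv_conjTranspose_mul_pderiv (h : PSpace d n) (V U : Mat d n) :
    (pderiv d n h V)ᴴ * pderiv d n h U = V * (Weyl d n h * (Vᴴ * U) * (Weyl d n h)ᴴ) * Uᴴ := by
  have hW : (Weyl d n h)ᴴ * Weyl d n h = 1 :=
    Matrix.mem_unitaryGroup_iff'.1 (Weyl_mem_unitary h)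
  simp only [pderiv, conjTranspose_mul, conjTranspose_conjTranspose, Matrix.mul_assoc]
  rw [← Matrix.mul_assoc (Weyl d n h)ᴴ, hW, Matrix.one_mul]

lemma trInner_smul_left (c : ℂ) (A B : Mat d n) :
    trInner d n (c • A) B = star c * trInner d n A B := by
  rw [trInner, trInner, conjTranspose_smul, Matrix.smul_mul, trace_smul, smul_eq_mul]
  ring

lemma pderiv_one (h : PSpace d n) : pderiv d n h 1 = 1 := by
  rw [pderiv, Matrix.mul_one, conjTranspose_one, Matrix.mul_one, ← star_eq_conjTranspose,
    Unitary.mul_star_self_of_mem (Weyl_mem_unitary h)]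

lemma avg_trInner_pderiv (V U : Mat d n) :
    ((d : ℂ) ^ (2 * n))⁻¹ * ∑ h, trInner d n (pderiv d n h V) (pderiv d n h U)
      = Complex.normSq (trInner d n V U) := by
  have hsum : ∑ h, ((pderiv d n h V)ᴴ * pderiv d n h U).trace
      = (d : ℂ) ^ n * (Vᴴ * U).trace * star (Vᴴ * U).trace := by
    simp only [pderiv_conjTranspose_mul_pderiv, ← trace_sum, ← Matrix.sum_mul, ← Matrix.mul_sum,
      sum_Weyl_conj, Matrix.mul_smul, Matrix.smul_mul, Matrix.mul_one, trace_smul, smul_eq_mul]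
    rw [← trace_conjTranspose, conjTranspose_mul, conjTranspose_conjTranspose, trace_mul_comm V]
  have hd : (d : ℂ) ≠ 0 := Nat.cast_ne_zero.2 (NeZero.ne d)
  simp only [trInner, ← Finset.mul_sum, hsum]
  rw [← Complex.mul_conj, map_mul, map_inv₀, map_pow, Complex.conj_natCast]
  field_simp
  rw [Complex.star_def]
  ring

end Twirl

section Bounds

variable {d n : ℕ} [NeZero d]

lemma card_PSpace : (Fintype.card (PSpace d n) : ℝ) = (d : ℝ) ^ (2 * n) := by
  simp [Fintype.card_prod, ZMod.card, two_mul, pow_add]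

lemma norm_trInner_le_one {V U : Mat d n} (hV : V ∈ unitary (Mat d n))
    (hU : U ∈ unitary (Mat d n)) : ‖trInner d n V U‖ ≤ 1 := by
  have htr := norm_trace_le_card_of_mem_unitary (mul_mem (Unitary.star_mem hV) hU)
  have hd : (0 : ℝ) < (d : ℝ) ^ n := pow_pos (Nat.cast_pos.2 (NeZero.pos d)) n
  rw [trInner, norm_mul, norm_inv, norm_pow, Complex.norm_natCast, ← star_eq_conjTranspose]
  rw [Fintype.card_fun, ZMod.card, Fintype.card_fin, Nat.cast_pow] at htr
  exact (inv_mul_le_one₀ hd).2 htr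

lemma re_average (f : PSpace d n → ℂ) :
    (((d : ℂ) ^ (2 * n))⁻¹ * ∑ h, f h).re
      = (Fintype.card (PSpace d n) : ℝ)⁻¹ * ∑ h, (f h).re := by
  rw [card_PSpace, ← Complex.re_sum, ← Complex.re_ofReal_mul]
  push_cast
  rfl

lemma pq_one (A : Mat d n) : pq d n 1 A = Complex.normSq (trInner d n 1 A) := by
  rw [← avg_trInner_pderiv]
  simp only [pq, pderiv_one, trInner, conjTranspose_one, Matrix.one_mul]

open scoped ComplexOrder in
lemma pq_succ_nonneg : ∀ (k : ℕ) (A : Mat d n), 0 ≤ pq d n (k + 1) A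
  | 0, A => by rw [pq_one]; exact Complex.zero_le_real.2 (Complex.normSq_nonneg _)
  | k + 1, A => by
    rw [pq]
    exact mul_nonneg (by positivity) (Finset.sum_nonneg fun h _ => pq_succ_nonneg k _)

lemma normSq_trInner_pow_le_re_pq (U : Mat d n) :
    ∀ m, ∀ V ∈ cliff d n m, Complex.normSq (trInner d n V U) ^ 2 ^ m ≤ (pq d n (m + 1) U).re
  | 0, _, ⟨θ, rfl⟩ => by
    rw [trInner_smul_left, Complex.normSq_mul, Complex.star_def, Complex.normSq_conj,
      Complex.normSq_eq_norm_sq, Complex.norm_exp_ofReal_mul_I, pq_one]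
    simp
  | m + 1, V, hV => by
    set c := (Fintype.card (PSpace d n) : ℝ)⁻¹
    have hre : Complex.normSq (trInner d n V U)
        = c * ∑ h, (trInner d n (pderiv d n h V) (pderiv d n h U)).re := by
      rw [← re_average, avg_trInner_pderiv, Complex.ofReal_re]
    calc Complex.normSq (trInner d n V U) ^ 2 ^ (m + 1)
        ≤ (c * ∑ h, ‖trInner d n (pderiv d n h V) (pderiv d n h U)‖) ^ 2 ^ (m + 1) := by
          refine pow_le_pow_left₀ (Complex.normSq_nonneg _) ?_ _
          rw [hre]
          gcongr with h
          exact Complex.re_le_norm _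
      _ ≤ c * ∑ h, ‖trInner d n (pderiv d n h V) (pderiv d n h U)‖ ^ 2 ^ (m + 1) :=
          pow_mean_le_mean_pow _ (fun _ => norm_nonneg _) _
      _ = c * ∑ h, Complex.normSq (trInner d n (pderiv d n h V) (pderiv d n h U)) ^ 2 ^ m := by
          simp only [pow_succ' 2, pow_mul, Complex.sq_norm]
      _ ≤ c * ∑ h, (pq d n (m + 1) (pderiv d n h U)).re := by
          gcongr with h
          exact normSq_trInner_pow_le_re_pq _ m _ (pderiv_mem_cliff h m V hV)
      _ = (pq d n (m + 2) U).re := by rw [pq, re_average]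

end Bounds

theorem stmt11_general (d n : ℕ) [NeZero d]
    (k : ℕ) (hk : 2 ≤ k) (U : Mat d n) (hU : U ∈ unitary (Mat d n)) :
    (pq d n k U).im = 0 ∧ 0 ≤ (pq d n k U).re ∧
    ∀ V ∈ cliff d n (k - 1),
      (‖trInner d n V U‖ ^ 2) ^ (2 ^ k) ≤ (pq d n k U).re ∧
      ‖trInner d n V U‖ ^ 2 ≤ pnorm d n k U := by
  obtain ⟨k, rfl⟩ : ∃ j, k = j + 1 := ⟨k - 1, by omega⟩
  obtain ⟨hre, him⟩ := Complex.nonneg_iff.1 (pq_succ_nonneg k U)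
  refine ⟨him.symm, hre, fun V hV => ?_⟩
  rw [Nat.add_sub_cancel] at hV
  have hF0 : 0 ≤ ‖trInner d n V U‖ ^ 2 := by positivity
  have hF1 : ‖trInner d n V U‖ ^ 2 ≤ 1 :=
    pow_le_one₀ (norm_nonneg _) (norm_trInner_le_one (cliff_subset_unitary k hV) hU)
  have hbound : (‖trInner d n V U‖ ^ 2) ^ 2 ^ (k + 1) ≤ (pq d n (k + 1) U).re :=
    (pow_le_pow_of_le_one hF0 hF1 (Nat.pow_le_pow_right two_pos k.le_succ)).trans
      (Complex.sq_norm _ ▸ normSq_trInner_pow_le_re_pq U k V hV)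
  refine ⟨hbound, ?_⟩
  rw [pnorm, Real.le_rpow_inv_iff_of_pos hF0 hre (by positivity)]
  exact_mod_cast hbound

theorem stmt11 (d n : ℕ) [NeZero d] (hd : d.Prime) (hn : 1 ≤ n)
    (k : ℕ) (hk : 2 ≤ k) (U : Mat d n) (hU : U ∈ unitary (Mat d n)) :
    (pq d n k U).im = 0 ∧ 0 ≤ (pq d n k U).re ∧
    ∀ V ∈ cliff d n (k - 1),
      (‖trInner d n V U‖ ^ 2) ^ (2 ^ k) ≤ (pq d n k U).re ∧
      ‖trInner d n V U‖ ^ 2 ≤ pnorm d n k U :=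
  stmt11_general d n k hk U hU

end CH
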